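/- Let s > 0, and suppose k* = Ī/(Ī − I̲) with I̲ < 0 < Ī, Ī + I̲ > 0, and k* < Φ(s). Suppose c ∈ ℝ satisfies both 1 − Φ((c − s²)/s) = k* and 1 − Φ((c + s²)/s) = 1 − k*. Then c = 0 and Φ(s) = k*, contradicting k* < Φ(s); hence no such c exists. (Consequently no linear threshold rule 1{wᵀY ≥ c} satisfies the Γ-MMR optimality conditions in the low-identification-power regime.) -/

import Mathlib

open MeasureTheory ProbabilityTheory Set

/-!
Since `Φ(-x) = 1 - Φ(x)`, the first equation reads `Φ((s² - c)/s) = 1 - k*`, which the second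
equation also gives for `Φ((c + s²)/s)`. As `Φ` is injective, `s² - c = c + s²`, i.e. `c = 0`,
and then the second equation says `Φ(s) = k*`.
-/

/-- The standard normal cumulative distribution function. -/
noncomputable def Phi (x : ℝ) : ℝ :=
  ∫ t in Set.Iic x, ProbabilityTheory.gaussianPDFReal 0 1 t

lemma gaussianPDFReal_zero_neg (v : NNReal) (x : ℝ) :
    gaussianPDFReal 0 v (-x) = gaussianPDFReal 0 v x := by
  simp [gaussianPDFReal]

lemma Phi_strictMono : StrictMono Phi := by
  intro a b hab
  have hint := integrable_gaussianPDFReal 0 1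
  have hpos : 0 < ∫ x in a..b, gaussianPDFReal 0 1 x :=
    intervalIntegral.intervalIntegral_pos_of_pos hint.intervalIntegrable
      (fun x => gaussianPDFReal_pos 0 1 x one_ne_zero) hab
  rw [← intervalIntegral.integral_Iic_sub_Iic hint.integrableOn hint.integrableOn] at hpos
  simpa only [Phi, sub_pos] using hpos

lemma Phi_neg (x : ℝ) : Phi (-x) = 1 - Phi x := by
  have hint := integrable_gaussianPDFReal 0 1
  have htotal : Phi x + ∫ t in Ioi x, gaussianPDFReal 0 1 t = 1 := by
    rw [Phi, intervalIntegral.integral_Iic_add_Ioi hint.integrableOn hint.integrableOn]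
    exact integral_gaussianPDFReal_eq_one 0 one_ne_zero
  have hreflect : Phi (-x) = ∫ t in Ioi x, gaussianPDFReal 0 1 t := by
    calc Phi (-x) = ∫ t in Iic (-x), gaussianPDFReal 0 1 (-t) := by
          simp only [Phi, gaussianPDFReal_zero_neg]
      _ = ∫ t in Ioi x, gaussianPDFReal 0 1 t := by rw [integral_comp_neg_Iic, neg_neg]
  linarith

theorem no_threshold_rule_optimal_general (s kstar : ℝ) (hs : 0 < s)
    (hlt : kstar < Phi s) :
    ¬ ∃ c : ℝ, 1 - Phi ((c - s ^ 2) / s) = kstar ∧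
      1 - Phi ((c + s ^ 2) / s) = 1 - kstar := by
  rintro ⟨c, h1, h2⟩
  have hflip : Phi ((s ^ 2 - c) / s) = Phi ((c + s ^ 2) / s) := by
    rw [← neg_sub, neg_div, Phi_neg]
    linarith
  have hc : c = 0 := by
    have := Phi_strictMono.injective hflip
    field_simp at this
    linarith
  subst hc
  have hs' : (0 + s ^ 2) / s = s := by rw [zero_add]; field_simp
  rw [hs'] at h2
  linarith

/-- in the low-identification-power regime `k* = Ī/(Ī−I̲) < Φ(s)`, no threshold
`c` satisfies both `1 − Φ((c − s²)/s) = k*` and `1 − Φ((c + s²)/s) = 1 − k*`; hence no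
linear threshold rule satisfies the Γ-MMR optimality conditions. -/
theorem no_threshold_rule_optimal (s Ibar Ilow kstar : ℝ) (hs : 0 < s)
    (hIlow : Ilow < 0) (hIbar : 0 < Ibar) (hsum : 0 < Ibar + Ilow)
    (hk : kstar = Ibar / (Ibar - Ilow)) (hlt : kstar < Phi s) :
    ¬ ∃ c : ℝ, 1 - Phi ((c - s ^ 2) / s) = kstar ∧
      1 - Phi ((c + s ^ 2) / s) = 1 - kstar :=
  no_threshold_rule_optimal_general s kstar hs hlt
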